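/- Let a < b and t₀ < t_f be real numbers, let A : [a,b] → ℝ^{n×n} be continuously differentiable, and let q, q̂ : [a,b] × [t₀,t_f] → ℝⁿ be continuously differentiable on the closed rectangle. Suppose q solves the forward hyperbolic system q_t(x,t) + A(x) q_x(x,t) = 0, q̂ solves the adjoint equation q̂_t(x,t) + (A(x)ᵀ q̂(x,t))_x = 0, and the boundary flux vanishes: q̂(a,t)ᵀ A(a) q(a,t) = 0 and q̂(b,t)ᵀ A(b) q(b,t) = 0 for all t ∈ [t₀, t_f]. Then the spatial integral of the inner product is conserved in time: for every t ∈ [t₀, t_f], ∫_a^b q̂(x,t)ᵀ q(x,t) dx = ∫_a^b q̂(x,t_f)ᵀ q(x,t_f) dx. -/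

import Mathlib

/-!
Let `G = q̂ ⬝ q`. The two equations give the Lagrange identity
`∂ₜG = q̂ₜ ⬝ q + q̂ ⬝ qₜ = -∂ₓ((Aᵀ q̂) ⬝ q)`, so at each time the `x`-integral of `∂ₜG` is a
difference of boundary fluxes and vanishes. Integrating `∂ₜG` over `[a,b] × [t,t_f]` in both
orders (Fubini, all integrands being continuous on the compact rectangle) then gives
`∫ G(·,t_f) - ∫ G(·,t) = 0`.
-/

open Matrix Set MeasureTheory Function

section DotProduct

variable {ι : Type*} [Fintype ι]

theorem ContinuousOn.dotProduct {α R : Type*} [TopologicalSpace α] [TopologicalSpace R]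
    [Mul R] [AddCommMonoid R] [ContinuousAdd R] [ContinuousMul R] {s : Set α} {u v : α → ι → R}
    (hu : ContinuousOn u s) (hv : ContinuousOn v s) :
    ContinuousOn (fun x => u x ⬝ᵥ v x) s :=
  continuousOn_finsetSum _ fun i _ => (continuousOn_pi.mp hu i).mul (continuousOn_pi.mp hv i)

theorem HasDerivWithinAt.dotProduct {𝕜 𝔸 : Type*} [NontriviallyNormedField 𝕜] [NormedRing 𝔸]
    [NormedAlgebra 𝕜 𝔸] {u v : 𝕜 → ι → 𝔸} {u' v' : ι → 𝔸} {s : Set 𝕜} {x : 𝕜}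
    (hu : HasDerivWithinAt u u' s x) (hv : HasDerivWithinAt v v' s x) :
    HasDerivWithinAt (fun y => u y ⬝ᵥ v y) (u' ⬝ᵥ v x + u x ⬝ᵥ v') s x := by
  have hsum := HasDerivWithinAt.fun_sum (u := Finset.univ) fun i _ =>
    ((hasDerivWithinAt_pi.mp hu) i).fun_mul ((hasDerivWithinAt_pi.mp hv) i)
  simpa only [_root_.dotProduct, Finset.sum_add_distrib] using hsum

end DotProduct

section Calculus

variable {E : Type*} [NormedAddCommGroup E] [NormedSpace ℝ E] {a b c d : ℝ}

theorem intervalIntegral.integral_eq_sub_of_hasDerivWithinAt_Icc [CompleteSpace E]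
    {f f' : ℝ → E} (hab : a ≤ b)
    (hf : ∀ x ∈ Icc a b, HasDerivWithinAt f (f' x) (Icc a b) x)
    (hf' : IntervalIntegrable f' volume a b) :
    ∫ x in a..b, f' x = f b - f a :=
  integral_eq_sub_of_hasDerivAt_of_le hab (fun x hx => (hf x hx).continuousWithinAt)
    (fun x hx => (hf x (Ioo_subset_Icc_self hx)).hasDerivAt (Icc_mem_nhds hx.1 hx.2)) hf'

theorem intervalIntegral_integral_swap_of_continuousOn {f : ℝ → ℝ → E} (hab : a ≤ b)
    (hcd : c ≤ d) (hf : ContinuousOn (uncurry f) (Icc a b ×ˢ Icc c d)) :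
    ∫ x in a..b, ∫ y in c..d, f x y = ∫ y in c..d, ∫ x in a..b, f x y := by
  have hint : Integrable (uncurry f)
      ((volume.restrict (Ioc a b)).prod (volume.restrict (Ioc c d))) := by
    rw [Measure.prod_restrict, ← Measure.volume_eq_prod]
    exact (hf.integrableOn_compact (isCompact_Icc.prod isCompact_Icc)).mono_set
      (prod_mono Ioc_subset_Icc_self Ioc_subset_Icc_self)
  simp only [intervalIntegral.integral_of_le hab, intervalIntegral.integral_of_le hcd]
  exact integral_integral_swap hint

theorem intervalIntegral_sub_eq_integral_integral_of_hasDerivWithinAt [CompleteSpace E]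
    {G G' : ℝ → ℝ → E} (hab : a ≤ b) (hcd : c ≤ d)
    (hG : ∀ x ∈ Icc a b, ∀ y ∈ Icc c d, HasDerivWithinAt (G x) (G' x y) (Icc c d) y)
    (hG' : ContinuousOn (uncurry G') (Icc a b ×ˢ Icc c d))
    (hGc : IntervalIntegrable (G · c) volume a b) (hGd : IntervalIntegrable (G · d) volume a b) :
    (∫ x in a..b, G x d) - ∫ x in a..b, G x c = ∫ y in c..d, ∫ x in a..b, G' x y := by
  rw [← intervalIntegral.integral_sub hGd hGc,
    ← intervalIntegral_integral_swap_of_continuousOn hab hcd hG']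
  refine intervalIntegral.integral_congr fun x hx => ?_
  rw [uIcc_of_le hab] at hx
  exact (intervalIntegral.integral_eq_sub_of_hasDerivWithinAt_Icc hcd (hG x hx)
    ((hG'.uncurry_left x hx).intervalIntegrable_of_Icc hcd)).symm

theorem intervalIntegral_eq_of_integral_hasDerivWithinAt_eq_zero [CompleteSpace E]
    {G G' : ℝ → ℝ → E} (hab : a ≤ b)
    (hG : ∀ x ∈ Icc a b, ∀ y ∈ Icc c d, HasDerivWithinAt (G x) (G' x y) (Icc c d) y)
    (hG' : ContinuousOn (uncurry G') (Icc a b ×ˢ Icc c d))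
    (hGint : ∀ y ∈ Icc c d, IntervalIntegrable (G · y) volume a b)
    (hG'zero : ∀ y ∈ Icc c d, ∫ x in a..b, G' x y = 0) :
    ∀ y ∈ Icc c d, ∫ x in a..b, G x y = ∫ x in a..b, G x d := by
  intro y hy
  have hsub : Icc y d ⊆ Icc c d := Icc_subset_Icc hy.1 le_rfl
  have hdiff := intervalIntegral_sub_eq_integral_integral_of_hasDerivWithinAt hab hy.2
    (fun x hx z hz => (hG x hx z (hsub hz)).mono hsub) (hG'.mono (prod_mono subset_rfl hsub))
    (hGint y hy) (hGint d ⟨hy.1.trans hy.2, le_rfl⟩)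
  rw [intervalIntegral.integral_congr (g := fun _ => 0) fun z hz => hG'zero z ?_,
    intervalIntegral.integral_zero, sub_eq_zero] at hdiff
  · exact hdiff.symm
  · exact hsub (by rwa [uIcc_of_le hy.2] at hz)

end Calculus

theorem dotProduct_add_dotProduct_eq_neg_of_add_eq_zero {ι R : Type*} [Fintype ι] [CommRing R]
    {M : Matrix ι ι R} {u u' w v v' vx : ι → R} (hv : v' + M *ᵥ vx = 0) (hu : u' + w = 0) :
    u' ⬝ᵥ v + u ⬝ᵥ v' = -(w ⬝ᵥ v + (Mᵀ *ᵥ u) ⬝ᵥ vx) := by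
  rw [eq_neg_of_add_eq_zero_left hv, eq_neg_of_add_eq_zero_left hu, mulVec_transpose,
    ← dotProduct_mulVec]
  simp only [neg_dotProduct, dotProduct_neg, neg_add]

theorem adjoint_inner_product_conservation_1d_general {n : ℕ}
    (a b t₀ tf : ℝ) (hab : a < b)
    (A : ℝ → Matrix (Fin n) (Fin n) ℝ)
    (q qhat qx qt qhatt dAqhat : ℝ → ℝ → Fin n → ℝ)
    -- the partial derivatives of q exist on the rectangle
    (hqx : ∀ x ∈ Icc a b, ∀ t ∈ Icc t₀ tf,
      HasDerivWithinAt (fun x' => q x' t) (qx x t) (Icc a b) x)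
    (hqt : ∀ x ∈ Icc a b, ∀ t ∈ Icc t₀ tf,
      HasDerivWithinAt (fun t' => q x t') (qt x t) (Icc t₀ tf) t)
    -- the partial derivatives of q̂ (and of x ↦ A(x)ᵀ q̂(x,t)) exist on the rectangle
    (hqhatt : ∀ x ∈ Icc a b, ∀ t ∈ Icc t₀ tf,
      HasDerivWithinAt (fun t' => qhat x t') (qhatt x t) (Icc t₀ tf) t)
    (hdAqhat : ∀ x ∈ Icc a b, ∀ t ∈ Icc t₀ tf,
      HasDerivWithinAt (fun x' => (A x')ᵀ *ᵥ qhat x' t) (dAqhat x t) (Icc a b) x)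
    -- continuity of the solutions and their derivatives on the closed rectangle
    (hqc : ContinuousOn (fun p : ℝ × ℝ => q p.1 p.2) (Icc a b ×ˢ Icc t₀ tf))
    (hqhatc : ContinuousOn (fun p : ℝ × ℝ => qhat p.1 p.2) (Icc a b ×ˢ Icc t₀ tf))
    (hqtc : ContinuousOn (fun p : ℝ × ℝ => qt p.1 p.2) (Icc a b ×ˢ Icc t₀ tf))
    (hqhattc : ContinuousOn (fun p : ℝ × ℝ => qhatt p.1 p.2) (Icc a b ×ˢ Icc t₀ tf))
    -- q solves the forward problem and q̂ solves the adjoint equation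
    (hforward : ∀ x ∈ Icc a b, ∀ t ∈ Icc t₀ tf, qt x t + A x *ᵥ qx x t = 0)
    (hadjoint : ∀ x ∈ Icc a b, ∀ t ∈ Icc t₀ tf, qhatt x t + dAqhat x t = 0)
    -- the boundary flux vanishes
    (hbc_a : ∀ t ∈ Icc t₀ tf, qhat a t ⬝ᵥ (A a *ᵥ q a t) = 0)
    (hbc_b : ∀ t ∈ Icc t₀ tf, qhat b t ⬝ᵥ (A b *ᵥ q b t) = 0) :
    ∀ t ∈ Icc t₀ tf,
      ∫ x in a..b, qhat x t ⬝ᵥ q x t = ∫ x in a..b, qhat x tf ⬝ᵥ q x tf := by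
  set G' : ℝ → ℝ → ℝ := fun x s => qhatt x s ⬝ᵥ q x s + qhat x s ⬝ᵥ qt x s
  have hGc : ContinuousOn (uncurry fun x s => qhat x s ⬝ᵥ q x s) (Icc a b ×ˢ Icc t₀ tf) :=
    hqhatc.dotProduct hqc
  have hG'c : ContinuousOn (uncurry G') (Icc a b ×ˢ Icc t₀ tf) :=
    (hqhattc.dotProduct hqc).add (hqhatc.dotProduct hqtc)
  -- By the Lagrange identity, `-(Aᵀ q̂) ⬝ q` is an antiderivative of `G'` in `x`.
  have hflux : ∀ s ∈ Icc t₀ tf, ∫ x in a..b, G' x s = 0 := by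
    intro s hs
    have hderiv : ∀ x ∈ Icc a b, HasDerivWithinAt (fun x => -((A x)ᵀ *ᵥ qhat x s ⬝ᵥ q x s))
        (G' x s) (Icc a b) x := fun x hx =>
      ((hdAqhat x hx s hs).dotProduct (hqx x hx s hs)).neg.congr_deriv
        (dotProduct_add_dotProduct_eq_neg_of_add_eq_zero (hforward x hx s hs)
          (hadjoint x hx s hs)).symm
    rw [intervalIntegral.integral_eq_sub_of_hasDerivWithinAt_Icc hab.le hderiv
      ((hG'c.uncurry_right s hs).intervalIntegrable_of_Icc hab.le)]
    simp only [mulVec_transpose, ← dotProduct_mulVec, hbc_a s hs, hbc_b s hs, neg_zero, sub_zero]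
  exact intervalIntegral_eq_of_integral_hasDerivWithinAt_eq_zero hab.le
    (fun x hx s hs => (hqhatt x hx s hs).dotProduct (hqt x hx s hs)) hG'c
    (fun s hs => (hGc.uncurry_right s hs).intervalIntegrable_of_Icc hab.le) hflux

/-- If `q` solves the forward hyperbolic system `q_t + A(x) q_x = 0`, `q̂` solves the
adjoint equation `q̂_t + (A(x)ᵀ q̂)_x = 0` on the rectangle `[a,b] × [t₀,t_f]` (with
everything continuously differentiable), and the boundary flux `q̂ᵀ A q` vanishes at
`x = a` and `x = b`, then `∫_a^b q̂(x,t)ᵀ q(x,t) dx` is the same for every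
`t ∈ [t₀,t_f]`, in particular equal to its value at `t = t_f`. -/
theorem adjoint_inner_product_conservation_1d {n : ℕ}
    (a b t₀ tf : ℝ) (hab : a < b) (ht : t₀ < tf)
    (A A' : ℝ → Matrix (Fin n) (Fin n) ℝ)
    (q qhat qx qt qhatt dAqhat : ℝ → ℝ → Fin n → ℝ)
    -- A is continuously differentiable on [a,b] (entrywise), with derivative A'
    (hA : ∀ i j, ∀ x ∈ Icc a b,
      HasDerivWithinAt (fun x' => A x' i j) (A' x i j) (Icc a b) x)
    (hA'c : ∀ i j, ContinuousOn (fun x => A' x i j) (Icc a b))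
    -- the partial derivatives of q exist on the rectangle
    (hqx : ∀ x ∈ Icc a b, ∀ t ∈ Icc t₀ tf,
      HasDerivWithinAt (fun x' => q x' t) (qx x t) (Icc a b) x)
    (hqt : ∀ x ∈ Icc a b, ∀ t ∈ Icc t₀ tf,
      HasDerivWithinAt (fun t' => q x t') (qt x t) (Icc t₀ tf) t)
    -- the partial derivatives of q̂ (and of x ↦ A(x)ᵀ q̂(x,t)) exist on the rectangle
    (hqhatt : ∀ x ∈ Icc a b, ∀ t ∈ Icc t₀ tf,
      HasDerivWithinAt (fun t' => qhat x t') (qhatt x t) (Icc t₀ tf) t)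
    (hdAqhat : ∀ x ∈ Icc a b, ∀ t ∈ Icc t₀ tf,
      HasDerivWithinAt (fun x' => (A x')ᵀ *ᵥ qhat x' t) (dAqhat x t) (Icc a b) x)
    -- continuity of the solutions and their derivatives on the closed rectangle
    (hqc : ContinuousOn (fun p : ℝ × ℝ => q p.1 p.2) (Icc a b ×ˢ Icc t₀ tf))
    (hqhatc : ContinuousOn (fun p : ℝ × ℝ => qhat p.1 p.2) (Icc a b ×ˢ Icc t₀ tf))
    (hqxc : ContinuousOn (fun p : ℝ × ℝ => qx p.1 p.2) (Icc a b ×ˢ Icc t₀ tf))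
    (hqtc : ContinuousOn (fun p : ℝ × ℝ => qt p.1 p.2) (Icc a b ×ˢ Icc t₀ tf))
    (hqhattc : ContinuousOn (fun p : ℝ × ℝ => qhatt p.1 p.2) (Icc a b ×ˢ Icc t₀ tf))
    (hdAqhatc : ContinuousOn (fun p : ℝ × ℝ => dAqhat p.1 p.2) (Icc a b ×ˢ Icc t₀ tf))
    -- q solves the forward problem and q̂ solves the adjoint equation
    (hforward : ∀ x ∈ Icc a b, ∀ t ∈ Icc t₀ tf, qt x t + A x *ᵥ qx x t = 0)
    (hadjoint : ∀ x ∈ Icc a b, ∀ t ∈ Icc t₀ tf, qhatt x t + dAqhat x t = 0)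
    -- the boundary flux vanishes
    (hbc_a : ∀ t ∈ Icc t₀ tf, qhat a t ⬝ᵥ (A a *ᵥ q a t) = 0)
    (hbc_b : ∀ t ∈ Icc t₀ tf, qhat b t ⬝ᵥ (A b *ᵥ q b t) = 0) :
    ∀ t ∈ Icc t₀ tf,
      ∫ x in a..b, qhat x t ⬝ᵥ q x t = ∫ x in a..b, qhat x tf ⬝ᵥ q x tf :=
  adjoint_inner_product_conservation_1d_general a b t₀ tf hab A q qhat qx qt qhatt dAqhat hqx hqt
    hqhatt hdAqhat hqc hqhatc hqtc hqhattc hforward hadjoint hbc_a hbc_b
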